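/- Let (X, 𝓕, m) be a probability space, T an m-nonsingular transformation whose Perron–Frobenius operator 𝓛_T is asymptotically periodic with data s, r(i), g_{i,j}, λ_{i,j}; set g_i = (1/r(i)) Σ_{j=1}^{r(i)} g_{i,j}, A_i = {g_i > 0}, and B = X \ ⋃_{i=1}^{s} A_i. Then m(T⁻¹(B) \ B) = 0 and lim_{n→∞} m(T⁻ⁿ(B)) = 0. -/

import Mathlib

open MeasureTheory Filter Topology

noncomputable section

/-- `L` is the Perron–Frobenius operator of the `μ`-nonsingular transformation `T`:
for every integrable `f`, `L f` is integrable and `∫_A L f dμ = ∫_{T⁻¹ A} f dμ`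
for every measurable set `A`. -/
def IsPF {α : Type*} [MeasurableSpace α] (μ : Measure α) (T : α → α)
    (L : (α → ℝ) → α → ℝ) : Prop :=
  ∀ f : α → ℝ, Integrable f μ →
    Integrable (L f) μ ∧
      ∀ A : Set α, MeasurableSet A → ∫ x in A, L f x ∂μ = ∫ x in T ⁻¹' A, f x ∂μ

/-- Asymptotic periodicity of an operator `L` on `L¹(μ)` with data `s`, `r i`,
probability densities `g i j` and bounded linear functionals `Λ i j`. -/
def AsympPeriodic {α : Type*} [MeasurableSpace α] (μ : Measure α)
    (L : (α → ℝ) → α → ℝ) (s : ℕ) (r : ℕ → ℕ) (g : ℕ → ℕ → α → ℝ)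
    (Λ : ℕ → ℕ → (α →₁[μ] ℝ) →L[ℝ] ℝ) : Prop :=
  1 ≤ s ∧ (∀ i ∈ Finset.Icc 1 s, 1 ≤ r i) ∧
    (∀ i ∈ Finset.Icc 1 s, ∀ j ∈ Finset.Icc 1 (r i),
      Measurable (g i j) ∧ Integrable (g i j) μ ∧ 0 ≤ᵐ[μ] g i j ∧ ∫ x, g i j x ∂μ = 1) ∧
    (∀ i ∈ Finset.Icc 1 s, ∀ j ∈ Finset.Icc 1 (r i), ∀ k ∈ Finset.Icc 1 s,
      ∀ l ∈ Finset.Icc 1 (r k), (i, j) ≠ (k, l) →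
        (fun x => g i j x * g k l x) =ᵐ[μ] 0) ∧
    (∀ i ∈ Finset.Icc 1 s,
      (∀ j ∈ Finset.Icc 1 (r i - 1), L (g i j) =ᵐ[μ] g i (j + 1)) ∧
        L (g i (r i)) =ᵐ[μ] g i 1) ∧
    ∀ (f : α → ℝ) (hf : Integrable f μ),
      Tendsto (fun n => ∫ x, |(L^[n] (fun x => f x -
          ∑ i ∈ Finset.Icc 1 s, ∑ j ∈ Finset.Icc 1 (r i), Λ i j (hf.toL1 f) * g i j x)) x| ∂μ)
        atTop (𝓝 0)

/-- The averaged density `(1/r) ∑_{j=1}^{r} g j`. -/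
def avgDens {α : Type*} (r : ℕ) (g : ℕ → α → ℝ) : α → ℝ :=
  fun x => (r : ℝ)⁻¹ * ∑ j ∈ Finset.Icc 1 r, g j x

/-!
Every `g i j` is nonnegative and vanishes a.e. on `B`, and `𝓛_T` maps each `g i j` to some
`g i j'`. As `∫_{T⁻¹A} g i j = ∫_A 𝓛_T g i j`, a nonnegative density vanishes on `T⁻¹A` as soon
as its image vanishes on `A`, so by induction all `g i j` vanish on every `T⁻ⁿB`; for `n = 1`
this gives `T⁻¹B ⊆ B` up to a null set. Hence for `f = 1` the function
`h = f - ∑ λ_{i,j}(f) g i j` equals `1` on `T⁻ⁿB`, and `m(T⁻ⁿB) = ∫_B 𝓛_Tⁿ h ≤ ‖𝓛_Tⁿ h‖₁ → 0`.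
-/

open Finset

theorem avgDens_nonpos_iff {α : Type*} {r : ℕ} {g : ℕ → α → ℝ} {x : α}
    (hg : ∀ j ∈ Icc 1 r, 0 ≤ g j x) :
    avgDens r g x ≤ 0 ↔ ∀ j ∈ Icc 1 r, g j x = 0 := by
  rw [← sum_eq_zero_iff_of_nonneg hg]
  rcases Nat.eq_zero_or_pos r with rfl | hr
  · simp [avgDens]
  · rw [avgDens, mul_nonpos_iff_pos_imp_nonpos]
    exact ⟨fun h => le_antisymm (h.1 (by positivity)) (sum_nonneg hg),
      fun h => ⟨fun _ => h.le, fun _ => by positivity⟩⟩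

def avgDensZeroSet {α : Type*} (s : ℕ) (r : ℕ → ℕ) (g : ℕ → ℕ → α → ℝ) : Set α :=
  Set.univ \ ⋃ i ∈ Icc 1 s, {x | 0 < avgDens (r i) (g i) x}

theorem mem_avgDensZeroSet {α : Type*} {s : ℕ} {r : ℕ → ℕ} {g : ℕ → ℕ → α → ℝ} {x : α} :
    x ∈ avgDensZeroSet s r g ↔ ∀ i ∈ Icc 1 s, avgDens (r i) (g i) x ≤ 0 := by
  simp [avgDensZeroSet]

section

variable {α : Type*} [MeasurableSpace α] {μ : Measure α} {T : α → α}
  {L : (α → ℝ) → α → ℝ}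

namespace IsPF

theorem iterate (hL : IsPF μ T L) (hT : Measurable T) (n : ℕ) : IsPF μ T^[n] L^[n] := by
  induction n with
  | zero => exact fun f hf => ⟨hf, fun A _ => rfl⟩
  | succ n ih =>
    intro f hf
    obtain ⟨hLf, hLf_set⟩ := hL f hf
    refine ⟨(ih (L f) hLf).1, fun A hA => ?_⟩
    rw [Function.iterate_succ_apply, (ih (L f) hLf).2 A hA, hLf_set _ (hT.iterate n hA)]
    rfl

theorem ae_restrict_preimage_eq_zero (hL : IsPF μ T L) {f : α → ℝ} (hf : Integrable f μ)
    (hf_nonneg : 0 ≤ᵐ[μ] f) {A : Set α} (hA : MeasurableSet A)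
    (hLf : L f =ᵐ[μ.restrict A] 0) : f =ᵐ[μ.restrict (T ⁻¹' A)] 0 := by
  refine (setIntegral_eq_zero_iff_of_nonneg_ae (ae_restrict_of_ae hf_nonneg)
    hf.integrableOn).1 ?_
  rw [← (hL f hf).2 A hA, integral_congr_ae hLf]
  simp

theorem measureReal_preimage_le (hL : IsPF μ T L) {A : Set α} (hA : MeasurableSet A)
    {f : α → ℝ} (hf : Integrable f μ) (hf_one : f =ᵐ[μ.restrict (T ⁻¹' A)] 1) :
    μ.real (T ⁻¹' A) ≤ ∫ x, |L f x| ∂μ := by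
  have hLf := (hL f hf).1
  calc μ.real (T ⁻¹' A) = ∫ x in T ⁻¹' A, f x ∂μ := by
        rw [integral_congr_ae hf_one]; simp
    _ = ∫ x in A, L f x ∂μ := ((hL f hf).2 A hA).symm
    _ ≤ ∫ x in A, |L f x| ∂μ :=
        integral_mono hLf.integrableOn hLf.abs.integrableOn fun x => le_abs_self _
    _ ≤ ∫ x, |L f x| ∂μ :=
        setIntegral_le_integral hLf.abs (Eventually.of_forall fun x => abs_nonneg _)

end IsPF

namespace AsympPeriodic

variable {s : ℕ} {r : ℕ → ℕ} {g : ℕ → ℕ → α → ℝ} {Λ : ℕ → ℕ → (α →₁[μ] ℝ) →L[ℝ] ℝ}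

theorem exists_map_ae_eq (h : AsympPeriodic μ L s r g Λ) {i j : ℕ} (hi : i ∈ Icc 1 s)
    (hj : j ∈ Icc 1 (r i)) : ∃ j' ∈ Icc 1 (r i), L (g i j) =ᵐ[μ] g i j' := by
  obtain ⟨-, -, -, -, hcycle, -⟩ := h
  rw [mem_Icc] at hj
  rcases hj.2.eq_or_lt with rfl | hlt
  · exact ⟨1, mem_Icc.2 ⟨le_rfl, hj.1⟩, (hcycle i hi).2⟩
  · exact ⟨j + 1, mem_Icc.2 ⟨by omega, hlt⟩, (hcycle i hi).1 j (mem_Icc.2 ⟨hj.1, by omega⟩)⟩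

theorem ae_nonneg (h : AsympPeriodic μ L s r g Λ) :
    ∀ᵐ x ∂μ, ∀ i ∈ Icc 1 s, ∀ j ∈ Icc 1 (r i), 0 ≤ g i j x := by
  simp only [eventually_all_finset]
  exact fun i hi j hj => (h.2.2.1 i hi j hj).2.2.1

theorem measurableSet_avgDensZeroSet (h : AsympPeriodic μ L s r g Λ) :
    MeasurableSet (avgDensZeroSet s r g) :=
  MeasurableSet.univ.diff <| measurableSet_biUnion _ fun i hi =>
    measurableSet_lt measurable_const <|
      (Finset.measurable_sum _ fun j hj => (h.2.2.1 i hi j hj).1).const_mul _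

theorem ae_eq_zero_on_avgDensZeroSet (h : AsympPeriodic μ L s r g Λ) :
    ∀ i ∈ Icc 1 s, ∀ j ∈ Icc 1 (r i), g i j =ᵐ[μ.restrict (avgDensZeroSet s r g)] 0 := by
  simp only [EventuallyEq, ← eventually_all_finset]
  rw [ae_restrict_iff' h.measurableSet_avgDensZeroSet]
  filter_upwards [h.ae_nonneg] with x hx hxB i hi
  exact (avgDens_nonpos_iff (hx i hi)).1 (mem_avgDensZeroSet.1 hxB i hi)

theorem ae_eq_zero_on_preimage (h : AsympPeriodic μ L s r g Λ) (hL : IsPF μ T L)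
    {A : Set α} (hA : MeasurableSet A)
    (hvanish : ∀ i ∈ Icc 1 s, ∀ j ∈ Icc 1 (r i), g i j =ᵐ[μ.restrict A] 0) :
    ∀ i ∈ Icc 1 s, ∀ j ∈ Icc 1 (r i), g i j =ᵐ[μ.restrict (T ⁻¹' A)] 0 := by
  intro i hi j hj
  obtain ⟨j', hj', hLg⟩ := h.exists_map_ae_eq hi hj
  obtain ⟨-, hint, hnonneg, -⟩ := h.2.2.1 i hi j hj
  exact hL.ae_restrict_preimage_eq_zero hint hnonneg hA
    (EventuallyEq.trans (ae_restrict_of_ae hLg) (hvanish i hi j' hj'))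

theorem ae_eq_zero_on_preimage_iterate (h : AsympPeriodic μ L s r g Λ) (hL : IsPF μ T L)
    (hT : Measurable T) (n : ℕ) :
    ∀ i ∈ Icc 1 s, ∀ j ∈ Icc 1 (r i),
      g i j =ᵐ[μ.restrict (T^[n] ⁻¹' avgDensZeroSet s r g)] 0 := by
  induction n with
  | zero => exact h.ae_eq_zero_on_avgDensZeroSet
  | succ n ih =>
    rw [Function.iterate_succ, Set.preimage_comp]
    exact h.ae_eq_zero_on_preimage hL (hT.iterate n h.measurableSet_avgDensZeroSet) ih

theorem measure_preimage_diff_avgDensZeroSet (h : AsympPeriodic μ L s r g Λ)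
    (hL : IsPF μ T L) (hT : Measurable T) :
    μ (T ⁻¹' avgDensZeroSet s r g \ avgDensZeroSet s r g) = 0 := by
  have hvanish := h.ae_eq_zero_on_preimage_iterate hL hT 1
  simp only [Function.iterate_one, EventuallyEq, ← eventually_all_finset] at hvanish
  rw [ae_restrict_iff' (hT h.measurableSet_avgDensZeroSet)] at hvanish
  rw [measure_eq_zero_iff_ae_notMem]
  filter_upwards [hvanish, h.ae_nonneg] with x hx hnonneg ⟨hxT, hxB⟩
  exact hxB <| mem_avgDensZeroSet.2 fun i hi =>
    (avgDens_nonpos_iff (hnonneg i hi)).2 (hx hxT i hi)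

theorem tendsto_measure_preimage_iterate_avgDensZeroSet [IsFiniteMeasure μ]
    (h : AsympPeriodic μ L s r g Λ) (hL : IsPF μ T L) (hT : Measurable T) :
    Tendsto (fun n => μ (T^[n] ⁻¹' avgDensZeroSet s r g)) atTop (𝓝 0) := by
  have hone : Integrable (fun _ => (1 : ℝ)) μ := integrable_const 1
  set f : α → ℝ := fun x => 1 -
    ∑ i ∈ Icc 1 s, ∑ j ∈ Icc 1 (r i), Λ i j (hone.toL1 fun _ => 1) * g i j x
  have hf : Integrable f μ := hone.sub <| integrable_finsetSum _ fun i hi =>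
    integrable_finsetSum _ fun j hj => (h.2.2.1 i hi j hj).2.1.const_mul _
  have hf_one (n : ℕ) : f =ᵐ[μ.restrict (T^[n] ⁻¹' avgDensZeroSet s r g)] 1 := by
    have hvanish := h.ae_eq_zero_on_preimage_iterate hL hT n
    simp only [EventuallyEq, ← eventually_all_finset] at hvanish
    filter_upwards [hvanish] with x hx
    simp +contextual [f, hx]
  refine (ENNReal.tendsto_toReal_iff (fun _ => measure_ne_top _ _) ENNReal.zero_ne_top).1 ?_
  rw [ENNReal.toReal_zero]
  exact squeeze_zero (fun _ => ENNReal.toReal_nonneg)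
    (fun n => (hL.iterate hT n).measureReal_preimage_le
      h.measurableSet_avgDensZeroSet hf (hf_one n))
    (h.2.2.2.2.2 _ hone)

end AsympPeriodic

end

theorem stmt_9_general {X : Type*} [MeasurableSpace X] (m : Measure X) [IsProbabilityMeasure m]
    (T : X → X) (hT : Measurable T)
    (L : (X → ℝ) → X → ℝ) (hL : IsPF m T L)
    (s : ℕ) (r : ℕ → ℕ) (g : ℕ → ℕ → X → ℝ) (Λ : ℕ → ℕ → (X →₁[m] ℝ) →L[ℝ] ℝ)
    (hap : AsympPeriodic m L s r g Λ) :
    m ((T ⁻¹' (Set.univ \ ⋃ i ∈ Finset.Icc 1 s, {x | 0 < avgDens (r i) (g i) x})) \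
        (Set.univ \ ⋃ i ∈ Finset.Icc 1 s, {x | 0 < avgDens (r i) (g i) x})) = 0 ∧
      Tendsto
        (fun n =>
          m (T^[n] ⁻¹'
            (Set.univ \ ⋃ i ∈ Finset.Icc 1 s, {x | 0 < avgDens (r i) (g i) x})))
        atTop (𝓝 0) :=
  ⟨hap.measure_preimage_diff_avgDensZeroSet hL hT,
    hap.tendsto_measure_preimage_iterate_avgDensZeroSet hL hT⟩

/-- **Proposition 2.6(b).** If `𝓛_T` is asymptotically periodic with data
`s, r, g, Λ`, `g_i = (1/r i) ∑_j g_{i,j}`, `A_i = {g_i > 0}` and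
`B = X \ ⋃ᵢ A_i`, then `T⁻¹(B) ⊆ B` up to an `m`-null set and
`m(T⁻ⁿ(B)) → 0` as `n → ∞`. -/
theorem stmt_9 {X : Type*} [MeasurableSpace X] (m : Measure X) [IsProbabilityMeasure m]
    (T : X → X) (hT : Measurable T)
    (hns : ∀ A : Set X, MeasurableSet A → m A = 0 → m (T ⁻¹' A) = 0)
    (L : (X → ℝ) → X → ℝ) (hL : IsPF m T L)
    (s : ℕ) (r : ℕ → ℕ) (g : ℕ → ℕ → X → ℝ) (Λ : ℕ → ℕ → (X →₁[m] ℝ) →L[ℝ] ℝ)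
    (hap : AsympPeriodic m L s r g Λ) :
    m ((T ⁻¹' (Set.univ \ ⋃ i ∈ Finset.Icc 1 s, {x | 0 < avgDens (r i) (g i) x})) \
        (Set.univ \ ⋃ i ∈ Finset.Icc 1 s, {x | 0 < avgDens (r i) (g i) x})) = 0 ∧
      Tendsto
        (fun n =>
          m (T^[n] ⁻¹'
            (Set.univ \ ⋃ i ∈ Finset.Icc 1 s, {x | 0 < avgDens (r i) (g i) x})))
        atTop (𝓝 0) :=
  stmt_9_general m T hT L hL s r g Λ hap
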